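/- Let V be a category with small coproducts and finite limits in which coproducts are universal. Let (x_i)_{i∈I} be a small family of objects, Y an object, and for each i let f_i, g_i : x_i → Y be a parallel pair with equalizer e_i → x_i. Then the morphism ∐_{i∈I} e_i → ∐_{i∈I} x_i (the coproduct of the equalizer inclusions) is an equalizer of the pair of morphisms ∐_{i∈I} x_i → Y induced respectively by the families (f_i)_{i∈I} and (g_i)_{i∈I}. -/
import Mathlib


open CategoryTheory CategoryTheory.Limits

universe v u

/-- Coproducts are universal: the coproduct of the pullbacks of the coprojections
along any morphism `f : Y ⟶ ∐ x` maps isomorphically onto `Y`. -/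
def UniversalCoproducts (V : Type u) [Category.{v} V] [HasCoproducts.{v} V] : Prop :=
  ∀ ⦃I : Type v⦄ (x : I → V) (Y : V) (f : Y ⟶ ∐ x)
    (y : I → V) (p : ∀ i, y i ⟶ Y) (q : ∀ i, y i ⟶ x i),
    (∀ i, IsPullback (q i) (p i) (Sigma.ι x i) f) → IsIso (Sigma.desc p)

/-- In a category with small coproducts and finite limits in which
coproducts are universal, the coproduct of a family of equalizers
`e i ⟶ x i` of parallel pairs `f i, g i : x i ⟶ Y` is an equalizer of the pair
of morphisms `∐ x ⟶ Y` induced by the families `f` and `g`. -/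
theorem coproduct_of_equalizers_is_equalizer (V : Type u) [Category.{v} V]
    [HasCoproducts.{v} V] [HasFiniteLimits V]
    (huniv : UniversalCoproducts V)
    {I : Type v} (x : I → V) (Y : V) (f g : ∀ i, x i ⟶ Y)
    (e : I → V) (inc : ∀ i, e i ⟶ x i)
    (w : ∀ i, inc i ≫ f i = inc i ≫ g i)
    (he : ∀ i, IsLimit (Fork.ofι (inc i) (w i)))
    (w' : Limits.Sigma.map inc ≫ Sigma.desc f = Limits.Sigma.map inc ≫ Sigma.desc g) :
    Nonempty (IsLimit (Fork.ofι (Limits.Sigma.map inc) w')) := by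
  -- the equalizer of the induced pair
  set k : equalizer (Sigma.desc f) (Sigma.desc g) ⟶ ∐ x := equalizer.ι _ _ with hk
  -- each `e i` maps into the equalizer
  have hu : ∀ i, (inc i ≫ Sigma.ι x i) ≫ Sigma.desc f = (inc i ≫ Sigma.ι x i) ≫ Sigma.desc g := by
    intro i
    simp only [Category.assoc, colimit.ι_desc]
    simpa using w i
  set u : ∀ i, e i ⟶ equalizer (Sigma.desc f) (Sigma.desc g) :=
    fun i => equalizer.lift (inc i ≫ Sigma.ι x i) (hu i) with hudef
  have huk : ∀ i, u i ≫ k = inc i ≫ Sigma.ι x i := fun i => equalizer.lift_ι _ _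
  -- each square `(inc i, u i, Sigma.ι x i, k)` is a pullback
  have hpb : ∀ i, IsPullback (inc i) (u i) (Sigma.ι x i) k := by
    intro i
    have key : ∀ (c : PullbackCone (Sigma.ι x i) k), c.fst ≫ f i = c.fst ≫ g i := by
      intro c
      have h1 : c.fst ≫ Sigma.ι x i ≫ Sigma.desc f = c.fst ≫ Sigma.ι x i ≫ Sigma.desc g := by
        rw [← Category.assoc, ← Category.assoc, c.condition, Category.assoc, Category.assoc,
          equalizer.condition]
      simpa using h1
    refine ⟨⟨(huk i).symm⟩, ⟨PullbackCone.IsLimit.mk _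
      (fun c => Fork.IsLimit.lift (he i) c.fst (key c)) (fun c => ?_) (fun c => ?_) ?_⟩⟩
    · simpa using Fork.IsLimit.lift_ι' (he i) c.fst (key c)
    · have hfac : Fork.IsLimit.lift (he i) c.fst (key c) ≫ inc i = c.fst := by
        simpa using Fork.IsLimit.lift_ι' (he i) c.fst (key c)
      rw [← cancel_mono k, Category.assoc, huk i, ← Category.assoc, hfac, c.condition]
    · intro c m hm1 _
      apply Fork.IsLimit.hom_ext (he i)
      have hfac : Fork.IsLimit.lift (he i) c.fst (key c) ≫ inc i = c.fst := by
        simpa using Fork.IsLimit.lift_ι' (he i) c.fst (key c)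
      simpa using hm1.trans hfac.symm
  -- universality: `Sigma.desc u` is an isomorphism
  have hiso : IsIso (Sigma.desc u) := huniv x _ k e u inc hpb
  have hcomm : Sigma.desc u ≫ k = Limits.Sigma.map inc := by
    ext i
    simp [huk i]
  refine ⟨Fork.IsLimit.mk' _ (fun s => ?_)⟩
  refine ⟨equalizer.lift s.ι s.condition ≫ inv (Sigma.desc u), ?_, ?_⟩
  · show (equalizer.lift s.ι s.condition ≫ inv (Sigma.desc u)) ≫ Limits.Sigma.map inc = s.ι
    calc (equalizer.lift s.ι s.condition ≫ inv (Sigma.desc u)) ≫ Limits.Sigma.map inc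
        = (equalizer.lift s.ι s.condition ≫ inv (Sigma.desc u)) ≫ Sigma.desc u ≫ k := by
          rw [hcomm]
      _ = s.ι := by
          rw [← Category.assoc, Category.assoc (equalizer.lift s.ι s.condition),
            IsIso.inv_hom_id, Category.comp_id, equalizer.lift_ι]
  · intro m hm
    have hm' : m ≫ Limits.Sigma.map inc = s.ι := by simpa using hm
    have h3 : m ≫ Sigma.desc u = equalizer.lift s.ι s.condition := by
      rw [← cancel_mono k, Category.assoc, hcomm, equalizer.lift_ι]
      exact hm'
    rw [← h3, Category.assoc, IsIso.hom_inv_id, Category.comp_id]
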